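/- arXiv:1007.0534 — 3 statements merged into one kernel-verified Lean document; each statement's English description precedes it below -/
import Mathlib

section
/- If G is a group in which every non-central element is conjugate to every other non-central element and G is not abelian, then all non-trivial elements of the quotient G/Z(G) have the same order. -/
theorem stmt_0 (G : Type*) [Group G]
    (hne : Subgroup.center G ≠ ⊤)
    (hconj : ∀ a b : G, a ∉ Subgroup.center G → b ∉ Subgroup.center G → IsConj a b) :
    ∀ a b : G ⧸ Subgroup.center G, a ≠ 1 → b ≠ 1 → orderOf a = orderOf b := by
  intro a b ha hb
  induction a using QuotientGroup.induction_on with | H x =>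
  induction b using QuotientGroup.induction_on with | H y =>
  have hx : x ∉ Subgroup.center G := fun h => ha ((QuotientGroup.eq_one_iff x).2 h)
  have hy : y ∉ Subgroup.center G := fun h => hb ((QuotientGroup.eq_one_iff y).2 h)
  obtain ⟨c, hc⟩ := hconj x y hx hy
  have h2 : SemiconjBy ((c : G) : G ⧸ Subgroup.center G) x y := by
    have := congrArg (QuotientGroup.mk (s := Subgroup.center G)) hc
    simpa [SemiconjBy, QuotientGroup.mk_mul] using this
  exact h2.orderOf_eq
end

section
/- If G is a group such that every finitely generated subgroup of G is a finite p-group, then for any finitely many elements x₀,...,xₙ of G, the intersection of their centralizers C(x₀) ∩ ... ∩ C(xₙ) is non-trivial. -/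
theorem stmt_5 (p : ℕ) (hp : p.Prime) (G : Type*) [Group G] [Infinite G]
    (hloc : ∀ H : Subgroup G, H.FG → Finite H ∧ IsPGroup p H)
    (n : ℕ) (x : Fin (n + 1) → G) :
    ∃ g : G, g ≠ 1 ∧ ∀ i, Commute g (x i) := by
  obtain ⟨y, hy⟩ := exists_ne (1 : G)
  set S : Set G := insert y (Set.range x) with hS
  have hSfin : S.Finite := (Set.finite_range x).insert y
  set H := Subgroup.closure S with hHdef
  have hFG : H.FG := (Subgroup.fg_iff H).mpr ⟨S, rfl, hSfin⟩
  obtain ⟨hfin, hpg⟩ := hloc H hFG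
  have hyH : y ∈ H := Subgroup.subset_closure (Set.mem_insert _ _)
  haveI : Nontrivial H := ⟨⟨⟨y, hyH⟩, 1, by simp [Subtype.ext_iff, hy]⟩⟩
  haveI := Fact.mk hp
  haveI := hpg.center_nontrivial
  obtain ⟨⟨g, hgc⟩, hg1⟩ := exists_ne (1 : Subgroup.center H)
  refine ⟨(g : G), ?_, ?_⟩
  · intro h
    apply hg1
    ext
    simpa using h
  · intro i
    have hxH : x i ∈ H := Subgroup.subset_closure (Set.mem_insert_of_mem _ ⟨i, rfl⟩)
    have := (Subgroup.mem_center_iff.mp hgc ⟨x i, hxH⟩)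
    have := congrArg (Subtype.val) this
    simpa [Commute, SemiconjBy] using this.symm
end

section
/- Let R be a subring of a product ∏ᵢ Rᵢ of rings and let b₀,...,b_N ∈ R be elements such that for each j, the projection of bⱼ to coordinate iⱼ is 0 but the projection of ∏_{k≠j} b_k to coordinate iⱼ is non-zero (the product taken in increasing order of k). Then for every j, the ideal Rb₀R ∩ ... ∩ Rb_NR is strictly contained in ∩_{k≠j} Rb_kR. -/
theorem stmt_13 (R : Type*) [Ring R] (I : Type*) (Rc : I → Type*) [∀ i, Ring (Rc i)]
    (φ : R →+* ∀ i, Rc i) (hinj : Function.Injective φ)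
    (N : ℕ) (idx : Fin (N + 1) → I) (b : Fin (N + 1) → R)
    (hzero : ∀ j, φ (b j) (idx j) = 0)
    (hprod : ∀ j : Fin (N + 1),
      φ ((((List.finRange (N + 1)).filter (· ≠ j)).map b).prod) (idx j) ≠ 0) :
    ∀ j : Fin (N + 1),
      (⨅ k, TwoSidedIdeal.span ({b k} : Set R)) <
        ⨅ k ∈ ({j}ᶜ : Finset (Fin (N + 1))), TwoSidedIdeal.span ({b k} : Set R) := by
  intro j
  set P : R := (((List.finRange (N + 1)).filter (· ≠ j)).map b).prod with hP
  -- the evaluation ring hom at coordinate idx j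
  set ψ : R →+* Rc (idx j) := (Pi.evalRingHom Rc (idx j)).comp φ with hψ
  have hPmem : ∀ k : Fin (N + 1), k ≠ j → P ∈ TwoSidedIdeal.span ({b k} : Set R) := by
    intro k hk
    have hkmem : k ∈ (List.finRange (N + 1)).filter (· ≠ j) := by
      simp [List.mem_filter, hk]
    obtain ⟨s, t, hst⟩ := List.append_of_mem hkmem
    rw [hP, hst, List.map_append, List.map_cons, List.prod_append, List.prod_cons,
      ← mul_assoc]
    exact TwoSidedIdeal.mul_mem_right _ _ _
      (TwoSidedIdeal.mul_mem_left _ _ _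
        (TwoSidedIdeal.subset_span (Set.mem_singleton _)))
  have hPnot : P ∉ TwoSidedIdeal.span ({b j} : Set R) := by
    intro hmem
    have hle : TwoSidedIdeal.span ({b j} : Set R) ≤ TwoSidedIdeal.ker ψ := by
      intro x hx
      exact TwoSidedIdeal.mem_span_iff.mp hx (TwoSidedIdeal.ker ψ) (by
        intro y hy
        rw [Set.mem_singleton_iff] at hy
        subst hy
        rw [SetLike.mem_coe, TwoSidedIdeal.mem_ker]
        exact hzero j)
    have : ψ P = 0 := (TwoSidedIdeal.mem_ker ψ).mp (hle hmem)
    exact hprod j this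
  rw [lt_iff_le_and_ne]
  constructor
  · refine le_iInf fun k => le_iInf fun _ => iInf_le _ _
  · intro heq
    have : P ∈ ⨅ k, TwoSidedIdeal.span ({b k} : Set R) := by
      rw [heq]
      rw [TwoSidedIdeal.mem_iInf]
      intro k
      by_cases hk : k ∈ ({j}ᶜ : Finset (Fin (N + 1)))
      · rw [iInf_pos hk]
        simp only [Finset.mem_compl, Finset.mem_singleton] at hk
        exact hPmem k hk
      · rw [iInf_neg hk]
        trivial
    have : P ∈ TwoSidedIdeal.span ({b j} : Set R) := by
      rw [TwoSidedIdeal.mem_iInf] at this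
      exact this j
    exact hPnot this
end
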